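/- Let G be a connected graph of order r ≥ 2, let H be a connected graph of order t ≥ 2, and let v be a vertex of H of degree t − 1. Then dim_s(G∘_v H) = r(t − 1) − ϖ(H − v), where H − v is the graph obtained from H by deleting v and ϖ denotes the twin-free clique number. -/

import Mathlib

namespace RootedStrong

variable {V : Type*}

/-- `u` is maximally distant from `v`: every neighbor `w` of `u` satisfies `d(v,w) ≤ d(u,v)`. -/
def MaxDistant (G : SimpleGraph V) (u v : V) : Prop :=
  ∀ w, G.Adj u w → G.dist v w ≤ G.dist u v

/-- `u` and `v` are mutually maximally distant. -/
def MMD (G : SimpleGraph V) (u v : V) : Prop :=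
  MaxDistant G u v ∧ MaxDistant G v u

/-- The boundary `∂(G)` of a graph. -/
def boundary (G : SimpleGraph V) : Set V := {u | ∃ v, MMD G u v}

/-- A vertex is simplicial if its neighborhood induces a complete graph. -/
def Simplicial (G : SimpleGraph V) (u : V) : Prop :=
  ∀ x ∈ G.neighborSet u, ∀ y ∈ G.neighborSet u, x ≠ y → G.Adj x y

/-- The set `σ(G)` of simplicial vertices. -/
def simplicialSet (G : SimpleGraph V) : Set V := {u | Simplicial G u}

/-- `w` strongly resolves `u` and `v`. -/
def StronglyResolves (G : SimpleGraph V) (w u v : V) : Prop :=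
  G.dist w u = G.dist w v + G.dist v u ∨ G.dist w v = G.dist w u + G.dist u v

/-- A set of vertices is a strong metric generator if every pair of distinct vertices is
strongly resolved by some of its elements. -/
def IsStrongGenerator (G : SimpleGraph V) (S : Set V) : Prop :=
  ∀ u v : V, u ≠ v → ∃ w ∈ S, StronglyResolves G w u v

/-- The strong metric dimension of a graph. -/
noncomputable def sdim (G : SimpleGraph V) [Fintype V] : ℕ :=
  sInf {n | ∃ S : Finset V, S.card = n ∧ IsStrongGenerator G (S : Set V)}

/-- A strong metric basis: a strong metric generator of minimum cardinality. -/
def IsStrongBasis (G : SimpleGraph V) [Fintype V] (S : Finset V) : Prop :=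
  IsStrongGenerator G (S : Set V) ∧ S.card = sdim G

/-- The rooted product graph `G ∘_v H`. -/
def rootedProd {α β : Type*} (G : SimpleGraph α) (H : SimpleGraph β) (v : β) :
    SimpleGraph (α × β) where
  Adj p q := (p.1 = q.1 ∧ H.Adj p.2 q.2) ∨ (p.2 = v ∧ q.2 = v ∧ G.Adj p.1 q.1)
  symm := by
    constructor
    rintro ⟨a, x⟩ ⟨b, y⟩ (⟨h1, h2⟩ | ⟨h1, h2, h3⟩)
    · exact Or.inl ⟨h1.symm, h2.symm⟩
    · exact Or.inr ⟨h2, h1, h3.symm⟩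
  loopless := by
    constructor
    rintro ⟨a, x⟩ (⟨_, h2⟩ | ⟨_, _, h3⟩)
    · exact H.irrefl h2
    · exact G.irrefl h3

/-- Two distinct vertices are true twins if they have equal closed neighborhoods. -/
def TrueTwins (G : SimpleGraph V) (x y : V) : Prop :=
  x ≠ y ∧ ∀ z, (z = x ∨ G.Adj x z) ↔ (z = y ∨ G.Adj y z)

/-- A twin-free clique: a clique containing no pair of true twins. -/
def IsTwinFreeClique (G : SimpleGraph V) (X : Set V) : Prop :=
  (∀ x ∈ X, ∀ y ∈ X, x ≠ y → G.Adj x y) ∧ ∀ x ∈ X, ∀ y ∈ X, ¬ TrueTwins G x y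

/-- The twin-free clique number `ϖ(G)`. -/
noncomputable def twinFreeCliqueNum (G : SimpleGraph V) : ℕ :=
  sSup {n | ∃ X : Set V, IsTwinFreeClique G X ∧ X.ncard = n}

/-!
When `v` is universal in `H`, distances in `G ∘_v H` are explicit: inside one copy of `H` they
are those of `H` (hence at most `2`), and from copy `a` to copy `b ≠ a` they are `d_G(a, b)` plus
one for each endpoint off the root. Two non-root vertices in different copies, and two non-root
vertices of one copy that are non-adjacent or true twins, are mutually maximally distant, so
nothing but themselves strongly resolves them. Hence the non-root vertices missed by a strong
metric generator lie in a single copy and form a twin-free clique of `H - v` there. Conversely,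
the non-root vertices minus one copy of a maximum twin-free clique of `H - v` form a strong
metric generator: roots are resolved along the geodesics through them, and two adjacent
non-twins `x, y` of the clique by a vertex adjacent to exactly one of them.
-/

open SimpleGraph

section Metric

variable {W : Type*} {G : SimpleGraph V} {w x y z : V}

lemma dist_map_le {G' : SimpleGraph W} (f : G →g G') (h : G.Reachable x y) :
    G'.dist (f x) (f y) ≤ G.dist x y := by
  obtain ⟨p, hp⟩ := h.exists_walk_length_eq_dist
  simpa [hp] using dist_le (p.map f)

lemma _root_.SimpleGraph.IsUniversal.dist_le_one (hw : G.IsUniversal w) (x : V) :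
    G.dist w x ≤ 1 := by
  by_cases h : w = x
  · simp [h]
  · exact (dist_eq_one_iff_adj.mpr (hw h)).le

lemma _root_.SimpleGraph.IsUniversal.dist_le_two (hG : G.Connected) (hw : G.IsUniversal w)
    (x y : V) : G.dist x y ≤ 2 := by
  have := hG.dist_triangle (u := x) (v := w) (w := y)
  have := hw.dist_le_one y
  have := SimpleGraph.dist_comm (G := G) (u := x) (v := w) ▸ hw.dist_le_one x
  omega

lemma dist_eq_two_of_adj_of_adj (hzx : G.Adj z x) (hxy : G.Adj x y) (hzy : z ≠ y)
    (h : ¬G.Adj z y) : G.dist z y = 2 :=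
  le_antisymm (dist_le (.cons hzx (.cons hxy .nil)))
    ((hzx.reachable.trans hxy.reachable).one_lt_dist_of_ne_of_not_adj hzy h)

end Metric

section StrongResolving

variable {G : SimpleGraph V} {w x y z : V}

lemma stronglyResolves_self_left (G : SimpleGraph V) (x y : V) : StronglyResolves G x x y :=
  Or.inr (by rw [dist_self, zero_add])

lemma StronglyResolves.symm (h : StronglyResolves G w x y) : StronglyResolves G w y x :=
  Or.symm h

/-- A geodesic from `y` to `w` leaves `y` through a neighbour that is no farther from `x` than
`y` is, and so gives a shortcut from `w` to `x`. -/
lemma eq_of_dist_eq_add_of_maxDistant (hG : G.Connected) (hy : MaxDistant G y x)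
    (h : G.dist w x = G.dist w y + G.dist y x) : w = y := by
  obtain ⟨p, hp⟩ := hG.exists_walk_length_eq_dist y w
  rcases p with _ | ⟨hyy', q⟩
  · rfl
  · rename_i y'
    have hy'w : G.dist y' w + 1 ≤ G.dist y w := by
      rw [← hp, Walk.length_cons]
      exact Nat.add_le_add_right (dist_le q) 1
    have hy'x : G.dist x y' ≤ G.dist y x := hy y' hyy'
    have := hG.dist_triangle (u := w) (v := y') (w := x)
    rw [SimpleGraph.dist_comm (u := w) (v := y'), SimpleGraph.dist_comm (u := y') (v := x)] at this
    rw [SimpleGraph.dist_comm (u := w) (v := y)] at h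
    omega

lemma StronglyResolves.eq_or_eq_of_mmd (hG : G.Connected) (hxy : MMD G x y)
    (h : StronglyResolves G w x y) : w = x ∨ w = y := by
  rcases h with h | h
  · exact Or.inr (eq_of_dist_eq_add_of_maxDistant hG hxy.2 h)
  · exact Or.inl (eq_of_dist_eq_add_of_maxDistant hG hxy.1 h)

lemma IsStrongGenerator.mem_or_mem_of_mmd {S : Set V} (hS : IsStrongGenerator G S)
    (hG : G.Connected) (hne : x ≠ y) (hxy : MMD G x y) : x ∈ S ∨ y ∈ S := by
  obtain ⟨w, hwS, hw⟩ := hS x y hne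
  rcases hw.eq_or_eq_of_mmd hG hxy with rfl | rfl
  · exact Or.inl hwS
  · exact Or.inr hwS

lemma TrueTwins.symm (h : TrueTwins G x y) : TrueTwins G y x :=
  ⟨h.1.symm, fun z => (h.2 z).symm⟩

lemma TrueTwins.adj (h : TrueTwins G x y) : G.Adj x y :=
  (((h.2 x).mp (Or.inl rfl)).resolve_left h.1).symm

lemma TrueTwins.maxDistant (h : TrueTwins G x y) : MaxDistant G x y := by
  intro z hxz
  rw [dist_eq_one_iff_adj.mpr h.adj]
  rcases (h.2 z).mp (Or.inr hxz) with rfl | hyz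
  · simp
  · exact (dist_eq_one_iff_adj.mpr hyz).le

lemma TrueTwins.mmd (h : TrueTwins G x y) : MMD G x y :=
  ⟨h.maxDistant, h.symm.maxDistant⟩

lemma _root_.SimpleGraph.IsUniversal.mmd_of_not_adj (hG : G.Connected) (hw : G.IsUniversal w)
    (hx : x ≠ w) (hy : y ≠ w) (hxy : x ≠ y) (h : ¬G.Adj x y) : MMD G x y := by
  have h2 : G.dist x y = 2 := dist_eq_two_of_adj_of_adj (hw hx.symm).symm (hw hy.symm) hxy h
  refine ⟨fun z _ => ?_, fun z _ => ?_⟩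
  · rw [h2]; exact hw.dist_le_two hG y z
  · rw [SimpleGraph.dist_comm (u := y), h2]; exact hw.dist_le_two hG _ _

lemma stronglyResolves_of_adj_of_not_adj (hxy : G.Adj x y) (hxz : G.Adj x z) (hzy : z ≠ y)
    (hyz : ¬G.Adj y z) : StronglyResolves G z x y :=
  Or.inr (by rw [dist_eq_two_of_adj_of_adj hxz.symm hxy hzy (fun h => hyz h.symm),
    dist_eq_one_iff_adj.mpr hxz.symm, dist_eq_one_iff_adj.mpr hxy])

lemma exists_stronglyResolves_of_adj_of_not_trueTwins (hxy : G.Adj x y)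
    (h : ¬TrueTwins G x y) :
    ∃ z, z ≠ x ∧ z ≠ y ∧ ¬(G.Adj z x ∧ G.Adj z y) ∧ StronglyResolves G z x y := by
  obtain ⟨z, hz⟩ : ∃ z, ¬((z = x ∨ G.Adj x z) ↔ (z = y ∨ G.Adj y z)) := by
    by_contra! hc
    exact h ⟨hxy.ne, hc⟩
  by_cases hx : z = x ∨ G.Adj x z
  · have ⟨hzy, hyz⟩ : z ≠ y ∧ ¬G.Adj y z := not_or.mp fun h' => hz (iff_of_true hx h')
    have hzx : z ≠ x := by rintro rfl; exact hyz hxy.symm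
    have hxz := hx.resolve_left hzx
    exact ⟨z, hzx, hzy, fun h' => hyz h'.2.symm,
      stronglyResolves_of_adj_of_not_adj hxy hxz hzy hyz⟩
  · have ⟨hzx, hxz⟩ := not_or.mp hx
    have hy : z = y ∨ G.Adj y z := by_contra fun h' => hz (iff_of_false hx h')
    have hzy : z ≠ y := by rintro rfl; exact hxz hxy
    have hyz := hy.resolve_left hzy
    exact ⟨z, hzx, hzy, fun h' => hxz h'.1.symm,
      (stronglyResolves_of_adj_of_not_adj hxy.symm hyz hzx hxz).symm⟩

lemma sdim_le_card [Fintype V] {S : Finset V} (hS : IsStrongGenerator G S) :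
    sdim G ≤ S.card :=
  Nat.sInf_le ⟨S, rfl, hS⟩

lemma exists_isStrongBasis [Fintype V] (G : SimpleGraph V) : ∃ S, IsStrongBasis G S := by
  have hne : {n | ∃ S : Finset V, S.card = n ∧ IsStrongGenerator G (S : Set V)}.Nonempty :=
    ⟨_, Finset.univ, rfl, fun x y _ => ⟨x, by simp, stronglyResolves_self_left G x y⟩⟩
  obtain ⟨S, hcard, hS⟩ := Nat.sInf_mem hne
  exact ⟨S, hS, hcard⟩

end StrongResolving

section TwinFreeClique

variable {G : SimpleGraph V} {w : V}

lemma TrueTwins.induce {s : Set V} {x y : s} (h : TrueTwins G x y) :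
    TrueTwins (G.induce s) x y := by
  refine ⟨fun hxy => h.1 (congrArg Subtype.val hxy), fun z => ?_⟩
  simpa only [comap_adj, Function.Embedding.subtype_apply, ← Subtype.ext_iff] using h.2 z

lemma _root_.SimpleGraph.IsUniversal.trueTwins_of_induce (hw : G.IsUniversal w)
    {x y : {u : V | u ≠ w}} (h : TrueTwins (G.induce {u | u ≠ w}) x y) : TrueTwins G x y := by
  refine ⟨fun hxy => h.1 (Subtype.ext hxy), fun z => ?_⟩
  by_cases hz : z = w
  · subst hz
    exact iff_of_true (Or.inr (hw x.2.symm).symm) (Or.inr (hw y.2.symm).symm)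
  · simpa only [comap_adj, Function.Embedding.subtype_apply, Subtype.ext_iff] using h.2 ⟨z, hz⟩

lemma IsTwinFreeClique.image_val {s : Set V} {X : Set s} (h : IsTwinFreeClique (G.induce s) X) :
    IsTwinFreeClique G (Subtype.val '' X) := by
  constructor
  · rintro _ ⟨x, hx, rfl⟩ _ ⟨y, hy, rfl⟩ hxy
    exact h.1 x hx y hy (fun h' => hxy (congrArg Subtype.val h'))
  · rintro _ ⟨x, hx, rfl⟩ _ ⟨y, hy, rfl⟩ hxy
    exact h.2 x hx y hy hxy.induce

lemma IsTwinFreeClique.preimage_val (hw : G.IsUniversal w) {X : Set V}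
    (h : IsTwinFreeClique G X) : IsTwinFreeClique (G.induce {u | u ≠ w}) (Subtype.val ⁻¹' X) :=
  ⟨fun x hx y hy hxy => h.1 x hx y hy (fun h' => hxy (Subtype.ext h')),
    fun x hx y hy hxy => h.2 x hx y hy (hw.trueTwins_of_induce hxy)⟩

lemma bddAbove_twinFreeClique_ncard [Finite V] :
    BddAbove {n | ∃ X : Set V, IsTwinFreeClique G X ∧ X.ncard = n} :=
  ⟨Nat.card V, by rintro _ ⟨X, -, rfl⟩; exact Set.ncard_le_card X⟩

lemma IsTwinFreeClique.ncard_le_twinFreeCliqueNum [Finite V] {X : Set V}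
    (h : IsTwinFreeClique G X) : X.ncard ≤ twinFreeCliqueNum G :=
  le_csSup bddAbove_twinFreeClique_ncard ⟨X, h, rfl⟩

lemma exists_isTwinFreeClique_ncard_eq [Finite V] (G : SimpleGraph V) :
    ∃ X : Set V, IsTwinFreeClique G X ∧ X.ncard = twinFreeCliqueNum G := by
  refine Nat.sSup_mem ?_ (bddAbove_twinFreeClique_ncard (G := G))
  exact ⟨0, ∅, ⟨by simp, by simp⟩, Set.ncard_empty V⟩

lemma exists_isTwinFreeClique_card_eq_induce [Fintype V] (G : SimpleGraph V) (w : V) :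
    ∃ X : Finset V, IsTwinFreeClique G X ∧ w ∉ X ∧
      X.card = twinFreeCliqueNum (G.induce {u | u ≠ w}) := by
  obtain ⟨X, hX, hcard⟩ := exists_isTwinFreeClique_ncard_eq (G.induce {u | u ≠ w})
  refine ⟨(Set.toFinite (Subtype.val '' X)).toFinset, by simpa using hX.image_val, by simp, ?_⟩
  rw [← Set.ncard_eq_toFinset_card, Set.ncard_image_of_injective _ Subtype.val_injective, hcard]

lemma IsTwinFreeClique.card_le_twinFreeCliqueNum_induce [Fintype V] (hw : G.IsUniversal w)
    {X : Finset V} (hX : IsTwinFreeClique G X) (hwX : w ∉ X) :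
    X.card ≤ twinFreeCliqueNum (G.induce {u | u ≠ w}) := by
  have himage : Subtype.val '' (Subtype.val ⁻¹' (X : Set V) : Set {u : V | u ≠ w}) = X :=
    Set.image_preimage_eq_of_subset fun x hx => ⟨⟨x, fun h => hwX (h ▸ hx)⟩, rfl⟩
  calc X.card = (X : Set V).ncard := (Set.ncard_coe_finset X).symm
    _ = (Subtype.val ⁻¹' (X : Set V) : Set {u : V | u ≠ w}).ncard := by
      rw [← himage, Set.ncard_image_of_injective _ Subtype.val_injective, himage]
    _ ≤ _ := (hX.preimage_val hw).ncard_le_twinFreeCliqueNum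

end TwinFreeClique

section RootedProduct

variable {α β : Type*} {G : SimpleGraph α} {H : SimpleGraph β} {v : β}
  {a b c : α} {x y z : β}

def rootedProdCopy (G : SimpleGraph α) (H : SimpleGraph β) (v : β) (a : α) :
    H →g rootedProd G H v where
  toFun x := (a, x)
  map_rel' h := Or.inl ⟨rfl, h⟩

def rootedProdRoot (G : SimpleGraph α) (H : SimpleGraph β) (v : β) :
    G →g rootedProd G H v where
  toFun a := (a, v)
  map_rel' h := Or.inr ⟨rfl, rfl, h⟩

lemma rootedProd_adj_mk_iff_of_ne (hx : x ≠ v) {q : α × β} :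
    (rootedProd G H v).Adj (a, x) q ↔ q.1 = a ∧ H.Adj x q.2 := by
  refine ⟨?_, fun h => Or.inl ⟨h.1.symm, h.2⟩⟩
  rintro (⟨h1, h2⟩ | ⟨h1, -, -⟩)
  · exact ⟨h1.symm, h2⟩
  · exact absurd h1 hx

lemma rootedProd_connected (hG : G.Connected) (hH : H.Connected) :
    (rootedProd G H v).Connected := by
  have := hG.nonempty
  have := hH.nonempty
  refine ⟨fun ⟨a, x⟩ ⟨b, y⟩ => ?_⟩
  exact (((hH.preconnected x v).map (rootedProdCopy G H v a)).trans
    ((hG.preconnected a b).map (rootedProdRoot G H v))).trans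
    ((hH.preconnected v y).map (rootedProdCopy G H v b))

open Classical in
/-- The distance in `G ∘_v H`: a shortest path between different copies runs through both roots. -/
noncomputable def rootedDist (G : SimpleGraph α) (H : SimpleGraph β) (v : β) (p q : α × β) : ℕ :=
  if p.1 = q.1 then H.dist p.2 q.2 else H.dist p.2 v + G.dist p.1 q.1 + H.dist v q.2

lemma rootedDist_root_left (a c : α) (y : β) :
    rootedDist G H v (a, v) (c, y) = G.dist a c + H.dist v y := by
  by_cases h : a = c <;> simp [rootedDist, h]

lemma rootedDist_le_of_adj (hG : G.Connected) (hH : H.Connected) {p p' : α × β}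
    (h : (rootedProd G H v).Adj p p') (q : α × β) :
    rootedDist G H v p q ≤ rootedDist G H v p' q + 1 := by
  obtain ⟨a, x⟩ := p
  obtain ⟨a', x'⟩ := p'
  obtain ⟨c, y⟩ := q
  rcases h with ⟨rfl, hxx'⟩ | ⟨rfl, rfl, haa'⟩
  · have := dist_eq_one_iff_adj.mpr hxx'
    simp only [rootedDist]
    split_ifs
    · linarith [hH.dist_triangle (u := x) (v := x') (w := y)]
    · linarith [hH.dist_triangle (u := x) (v := x') (w := v)]
  · rw [rootedDist_root_left, rootedDist_root_left]
    linarith [hG.dist_triangle (u := a) (v := a') (w := c), dist_eq_one_iff_adj.mpr haa']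

lemma rootedDist_le_length (hG : G.Connected) (hH : H.Connected) {p q : α × β}
    (w : (rootedProd G H v).Walk p q) : rootedDist G H v p q ≤ w.length := by
  induction w with
  | nil => simp [rootedDist]
  | cons h w ih =>
    rw [Walk.length_cons]
    exact (rootedDist_le_of_adj hG hH h _).trans (by omega)

lemma dist_le_rootedDist (hG : G.Connected) (hH : H.Connected) (p q : α × β) :
    (rootedProd G H v).dist p q ≤ rootedDist G H v p q := by
  obtain ⟨a, x⟩ := p
  obtain ⟨b, y⟩ := q
  have copy (c : α) (x y : β) : (rootedProd G H v).dist (c, x) (c, y) ≤ H.dist x y :=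
    dist_map_le (rootedProdCopy G H v c) (hH.preconnected x y)
  simp only [rootedDist]
  split_ifs with hab
  · subst hab
    exact copy a x y
  · have hR := rootedProd_connected hG hH (v := v)
    calc (rootedProd G H v).dist (a, x) (b, y)
        ≤ (rootedProd G H v).dist (a, x) (a, v) + (rootedProd G H v).dist (a, v) (b, v)
          + (rootedProd G H v).dist (b, v) (b, y) :=
          (hR.dist_triangle).trans (add_le_add_left hR.dist_triangle _)
      _ ≤ H.dist x v + G.dist a b + H.dist v y := by
          gcongr
          · exact copy a x v
          · exact dist_map_le (rootedProdRoot G H v) (hG.preconnected a b)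
          · exact copy b v y

lemma rootedProd_dist (hG : G.Connected) (hH : H.Connected) (p q : α × β) :
    (rootedProd G H v).dist p q = rootedDist G H v p q := by
  obtain ⟨w, hw⟩ := (rootedProd_connected hG hH).exists_walk_length_eq_dist p q
  exact le_antisymm (dist_le_rootedDist hG hH p q) (hw ▸ rootedDist_le_length hG hH w)

lemma rootedProd_dist_mk_same (hG : G.Connected) (hH : H.Connected) (a : α) (x y : β) :
    (rootedProd G H v).dist (a, x) (a, y) = H.dist x y := by
  simp [rootedProd_dist hG hH, rootedDist]

lemma rootedProd_dist_mk_of_ne (hG : G.Connected) (hH : H.Connected) (hab : a ≠ b) (x y : β) :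
    (rootedProd G H v).dist (a, x) (b, y) = H.dist x v + G.dist a b + H.dist v y := by
  simp [rootedProd_dist hG hH, rootedDist, hab]

lemma stronglyResolves_rootedProd_exit_root (hG : G.Connected) (hH : H.Connected) (hac : a ≠ c)
    (x z : β) : StronglyResolves (rootedProd G H v) (c, z) (a, x) (c, v) :=
  Or.inl (by
    simp [rootedProd_dist_mk_of_ne hG hH hac.symm, rootedProd_dist_mk_same hG hH, add_assoc])

lemma stronglyResolves_rootedProd_entry_root (hG : G.Connected) (hH : H.Connected) (hac : a ≠ c)
    (x z : β) : StronglyResolves (rootedProd G H v) (c, z) (a, x) (a, v) :=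
  Or.inl (by simp [rootedProd_dist_mk_of_ne hG hH hac.symm, rootedProd_dist_mk_same hG hH])

lemma stronglyResolves_rootedProd_mk_iff (hG : G.Connected) (hH : H.Connected) :
    StronglyResolves (rootedProd G H v) (a, z) (a, x) (a, y) ↔ StronglyResolves H z x y := by
  simp only [StronglyResolves, rootedProd_dist_mk_same hG hH]

lemma maxDistant_rootedProd_mk (hG : G.Connected) (hH : H.Connected) (hx : x ≠ v)
    (h : MaxDistant H x y) : MaxDistant (rootedProd G H v) (a, x) (a, y) := by
  rintro ⟨c, z⟩ hxz
  obtain ⟨rfl, hxz'⟩ := (rootedProd_adj_mk_iff_of_ne hx).mp hxz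
  rw [rootedProd_dist_mk_same hG hH, rootedProd_dist_mk_same hG hH]
  exact h z hxz'

lemma maxDistant_rootedProd_of_ne (hG : G.Connected) (hH : H.Connected) (hv : H.IsUniversal v)
    (hab : a ≠ b) (hx : x ≠ v) :
    MaxDistant (rootedProd G H v) (a, x) (b, y) := by
  rintro ⟨c, z⟩ hxz
  obtain ⟨rfl, -⟩ := (rootedProd_adj_mk_iff_of_ne hx).mp hxz
  rw [rootedProd_dist_mk_of_ne hG hH hab.symm, rootedProd_dist_mk_of_ne hG hH hab,
    SimpleGraph.dist_comm (u := y), SimpleGraph.dist_comm (u := b),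
    dist_eq_one_iff_adj.mpr (hv hx.symm).symm]
  linarith [hv.dist_le_one z]

lemma mmd_rootedProd_of_ne (hG : G.Connected) (hH : H.Connected) (hv : H.IsUniversal v)
    (hab : a ≠ b) (hx : x ≠ v) (hy : y ≠ v) : MMD (rootedProd G H v) (a, x) (b, y) :=
  ⟨maxDistant_rootedProd_of_ne hG hH hv hab hx,
    maxDistant_rootedProd_of_ne hG hH hv hab.symm hy⟩

lemma mmd_rootedProd_mk (hG : G.Connected) (hH : H.Connected) (hx : x ≠ v) (hy : y ≠ v)
    (h : MMD H x y) : MMD (rootedProd G H v) (a, x) (a, y) :=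
  ⟨maxDistant_rootedProd_mk hG hH hx h.1, maxDistant_rootedProd_mk hG hH hy h.2⟩

lemma IsStrongGenerator.rootedProd_fst_eq_and_adj_and_not_trueTwins {S : Set (α × β)}
    (hS : IsStrongGenerator (rootedProd G H v) S) (hG : G.Connected) (hH : H.Connected)
    (hv : H.IsUniversal v) {p q : α × β} (hp : p.2 ≠ v) (hq : q.2 ≠ v) (hpS : p ∉ S)
    (hqS : q ∉ S) (hpq : p ≠ q) : p.1 = q.1 ∧ H.Adj p.2 q.2 ∧ ¬TrueTwins H p.2 q.2 := by
  obtain ⟨a, x⟩ := p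
  obtain ⟨b, y⟩ := q
  have hmmd : ¬MMD (rootedProd G H v) (a, x) (b, y) := fun h =>
    (hS.mem_or_mem_of_mmd (rootedProd_connected hG hH) hpq h).elim hpS hqS
  obtain rfl | hab := eq_or_ne a b
  · have hxy : x ≠ y := fun h => hpq (h ▸ rfl)
    refine ⟨rfl, by_contra fun h => hmmd (mmd_rootedProd_mk hG hH hp hq ?_)⟩
    rcases not_and_or.mp h with hadj | htwins
    · exact hv.mmd_of_not_adj hH hp hq hxy hadj
    · exact (not_not.mp htwins).mmd
  · exact absurd (mmd_rootedProd_of_ne hG hH hv hab hp hq) hmmd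

lemma exists_stronglyResolves_rootedProd_root (hG : G.Connected) (hH : H.Connected)
    {a₀ b₀ : α} (hab : a₀ ≠ b₀) (z : β) {p : α × β} {b : α} (hp : p.2 ≠ v → p.1 = a₀)
    (hpb : p ≠ (b, v)) : ∃ c ≠ a₀, StronglyResolves (rootedProd G H v) (c, z) p (b, v) := by
  obtain ⟨a, x⟩ := p
  obtain rfl | hab' := eq_or_ne a b
  · have hx : x ≠ v := fun h => hpb (h ▸ rfl)
    obtain rfl := hp hx
    exact ⟨b₀, hab.symm, stronglyResolves_rootedProd_entry_root hG hH hab x z⟩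
  · by_cases hb : b = a₀
    · subst hb
      have hx : v = x := by_contra fun hx => hab' (hp (Ne.symm hx))
      subst hx
      exact ⟨a, hab', (stronglyResolves_rootedProd_exit_root hG hH hab'.symm v z).symm⟩
    · exact ⟨b, hb, stronglyResolves_rootedProd_exit_root hG hH hab' x z⟩

lemma exists_stronglyResolves_rootedProd_of_isTwinFreeClique (hG : G.Connected)
    (hH : H.Connected) (hv : H.IsUniversal v) {X : Set β} (hX : IsTwinFreeClique H X)
    (hx : x ∈ X) (hy : y ∈ X) (hxv : x ≠ v) (hyv : y ≠ v) (hxy : x ≠ y) (a : α) :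
    ∃ z ∉ X, z ≠ v ∧ StronglyResolves (rootedProd G H v) (a, z) (a, x) (a, y) := by
  obtain ⟨z, hzx, hzy, hz, hres⟩ :=
    exists_stronglyResolves_of_adj_of_not_trueTwins (hX.1 x hx y hy hxy) (hX.2 x hx y hy)
  refine ⟨z, fun h => hz ⟨hX.1 z h x hx hzx, hX.1 z h y hy hzy⟩, ?_,
    (stronglyResolves_rootedProd_mk_iff hG hH).mpr hres⟩
  rintro rfl
  exact hz ⟨hv (Ne.symm hxv), hv (Ne.symm hyv)⟩

end RootedProduct

section StrongDimension

variable {α β : Type*} [Fintype α] [Fintype β] {G : SimpleGraph α} {H : SimpleGraph β} {v : β}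

lemma card_mul_le_card_add_twinFreeCliqueNum [DecidableEq α] [DecidableEq β]
    (hG : G.Connected) (hH : H.Connected) (hv : H.IsUniversal v) {S : Finset (α × β)}
    (hS : IsStrongGenerator (rootedProd G H v) S) :
    Fintype.card α * (Fintype.card β - 1) ≤ S.card + twinFreeCliqueNum (H.induce {w | w ≠ v}) := by
  set N := (Finset.univ : Finset α) ×ˢ Finset.univ.erase v
  have hN (p : α × β) : p ∈ N ↔ p.2 ≠ v := by simp [N]
  have hmissed (p) (hp : p ∈ N \ S) (q) (hq : q ∈ N \ S) (hpq : p ≠ q) :=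
    have ⟨hpN, hpS⟩ := Finset.mem_sdiff.mp hp
    have ⟨hqN, hqS⟩ := Finset.mem_sdiff.mp hq
    hS.rootedProd_fst_eq_and_adj_and_not_trueTwins hG hH hv ((hN p).mp hpN) ((hN q).mp hqN)
      hpS hqS hpq
  have hinj : Set.InjOn Prod.snd (N \ S : Finset (α × β)) := fun p hp q hq h =>
    by_contra fun hpq => (hmissed p hp q hq hpq).2.1.ne h
  set T := (N \ S).image Prod.snd
  have hT : IsTwinFreeClique H T := by
    simp only [IsTwinFreeClique, T, Finset.coe_image, Set.forall_mem_image]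
    refine ⟨fun p hp q hq hpq => ?_, fun p hp q hq htwins => ?_⟩
    · exact (hmissed p hp q hq fun h => hpq (h ▸ rfl)).2.1
    · exact (hmissed p hp q hq fun h => htwins.1 (h ▸ rfl)).2.2 htwins
  have hvT : v ∉ T := by simp [T, hN]
  calc Fintype.card α * (Fintype.card β - 1) = N.card := by simp [N]
    _ ≤ (N \ S).card + S.card := Finset.card_le_card_sdiff_add_card
    _ = T.card + S.card := by rw [Finset.card_image_of_injOn hinj]
    _ ≤ _ := by rw [add_comm]; gcongr; exact hT.card_le_twinFreeCliqueNum_induce hv hvT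

lemma isStrongGenerator_rootedProd [DecidableEq α] [DecidableEq β] (hG : G.Connected)
    (hH : H.Connected) (hv : H.IsUniversal v) {a₀ b₀ : α} (hab : a₀ ≠ b₀) {z₀ : β}
    (hz₀ : z₀ ≠ v) {X : Finset β} (hX : IsTwinFreeClique H X) :
    IsStrongGenerator (rootedProd G H v)
      ↑((Finset.univ ×ˢ Finset.univ.erase v) \ ({a₀} ×ˢ X)) := by
  set S := (Finset.univ ×ˢ Finset.univ.erase v) \ ({a₀} ×ˢ X)
  have hmem (p : α × β) : p ∈ S ↔ p.2 ≠ v ∧ ¬(p.1 = a₀ ∧ p.2 ∈ X) := by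
    simp only [S, Finset.mem_sdiff, Finset.mem_product, Finset.mem_univ, Finset.mem_erase,
      Finset.mem_singleton, true_and, and_true]
  have hnot (p : α × β) (hp : p ∉ S) (hpv : p.2 ≠ v) : p.1 = a₀ ∧ p.2 ∈ X := by
    by_contra h
    exact hp ((hmem p).mpr ⟨hpv, h⟩)
  have root (p : α × β) (b : α) (hp : p ∉ S) (hpb : p ≠ (b, v)) :
      ∃ w ∈ (S : Set (α × β)), StronglyResolves (rootedProd G H v) w p (b, v) := by
    obtain ⟨c, hc, h⟩ := exists_stronglyResolves_rootedProd_root hG hH hab z₀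
      (fun hpv => (hnot p hp hpv).1) hpb
    exact ⟨(c, z₀), (hmem _).mpr ⟨hz₀, fun h => hc h.1⟩, h⟩
  intro p q hpq
  by_cases hpS : p ∈ S
  · exact ⟨p, hpS, stronglyResolves_self_left _ p q⟩
  by_cases hqS : q ∈ S
  · exact ⟨q, hqS, (stronglyResolves_self_left _ q p).symm⟩
  obtain ⟨b, y⟩ := q
  by_cases hy : y = v
  · subst hy
    exact root p b hpS hpq
  obtain ⟨a, x⟩ := p
  by_cases hx : x = v
  · subst hx
    obtain ⟨w, hw, h⟩ := root (b, y) a hqS hpq.symm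
    exact ⟨w, hw, h.symm⟩
  obtain ⟨ha : a = a₀, hxX⟩ := hnot _ hpS hx
  obtain ⟨hb : b = a₀, hyX⟩ := hnot _ hqS hy
  subst a b
  obtain ⟨z, hzX, hzv, hres⟩ := exists_stronglyResolves_rootedProd_of_isTwinFreeClique hG hH hv
    hX hxX hyX hx hy (by rintro rfl; exact hpq rfl) a₀
  exact ⟨(a₀, z), (hmem _).mpr ⟨hzv, fun h => hzX h.2⟩, hres⟩

theorem sdim_rootedProd_add_twinFreeCliqueNum [Nontrivial α] [Nontrivial β] (hG : G.Connected)
    (hH : H.Connected) (hv : H.IsUniversal v) :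
    sdim (rootedProd G H v) + twinFreeCliqueNum (H.induce {w | w ≠ v}) =
      Fintype.card α * (Fintype.card β - 1) := by
  classical
  obtain ⟨a₀, b₀, hab⟩ := exists_pair_ne α
  obtain ⟨z₀, hz₀⟩ := exists_ne v
  obtain ⟨X, hX, hvX, hXcard⟩ := exists_isTwinFreeClique_card_eq_induce H v
  obtain ⟨S, hS, hScard⟩ := exists_isStrongBasis (rootedProd G H v)
  have hupper := sdim_le_card (isStrongGenerator_rootedProd hG hH hv hab hz₀ hX)
  have hlower := card_mul_le_card_add_twinFreeCliqueNum hG hH hv hS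
  have hsub : {a₀} ×ˢ X ⊆ Finset.univ ×ˢ Finset.univ.erase v := by
    intro p hp
    rw [Finset.mem_product] at hp ⊢
    exact ⟨Finset.mem_univ _,
      Finset.mem_erase.mpr ⟨fun h => hvX (h ▸ hp.2), Finset.mem_univ _⟩⟩
  have hle := Finset.card_le_card hsub
  rw [Finset.card_sdiff_of_subset hsub] at hupper
  simp only [Finset.card_product, Finset.card_univ, Finset.card_singleton, one_mul,
    Finset.card_erase_of_mem (Finset.mem_univ v)] at hupper hle
  omega

end StrongDimension

theorem statement11 {α β : Type*} [Fintype α] [Fintype β]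
    (G : SimpleGraph α) (H : SimpleGraph β)
    (hG : G.Connected) (hH : H.Connected)
    {r t : ℕ} (hr : Fintype.card α = r) (h2r : 2 ≤ r)
    (ht : Fintype.card β = t) (h2t : 2 ≤ t)
    (v : β) (hv : (H.neighborSet v).ncard = t - 1) :
    (sdim (rootedProd G H v) : ℤ) =
      r * ((t : ℤ) - 1) - twinFreeCliqueNum (H.induce {w : β | w ≠ v}) := by
  classical
  subst hr ht
  have hu : H.IsUniversal v := by
    rw [← degree_eq_card_sub_one, ← card_neighborSet_eq_degree, ← Nat.card_eq_fintype_card,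
      Nat.card_coe_set_eq, hv]
  have : Nontrivial α := Fintype.one_lt_card_iff_nontrivial.mp h2r
  have : Nontrivial β := Fintype.one_lt_card_iff_nontrivial.mp h2t
  have h := sdim_rootedProd_add_twinFreeCliqueNum hG hH hu
  zify [show 1 ≤ Fintype.card β by omega] at h
  linarith

end RootedStrong
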